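/- For a diagonal matrix D = diag(t, t, 1, …, 1) with t ≠ 0 and a symmetric matrix x with all entries nonzero such that J(x) is invertible: (J(D x D))⁻¹ = D (J(x))⁻¹ D. Consequently, K(D x D) = D K(x) D where K(x) = (J(x))⁻¹. -/

import Mathlib

/-!
Entrywise inversion turns a two-sided diagonal scaling `diag d * x * diag e` into the scaling by the
reciprocals `diag d⁻¹ * J x * diag e⁻¹`; inverting that matrix product reverses the factors and
inverts the diagonal ones back to `diag d` and `diag e`.
-/

namespace Matrix

variable {n K : Type*} [Fintype n] [DecidableEq n] [Field K]

theorem of_inv_diagonal_mul_mul_diagonal (d e : n → K) (x : Matrix n n K) :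
    (of fun i j => ((diagonal d * x * diagonal e) i j)⁻¹) =
      diagonal d⁻¹ * (of fun i j => (x i j)⁻¹) * diagonal e⁻¹ := by
  ext i j
  simp only [mul_diagonal, diagonal_mul, of_apply, Pi.inv_apply, mul_inv]

theorem inv_diagonal_inv {d : n → K} (hd : ∀ i, d i ≠ 0) :
    (diagonal d⁻¹)⁻¹ = diagonal d := by
  refine inv_eq_left_inv ?_
  rw [diagonal_mul_diagonal, ← diagonal_one]
  exact congrArg diagonal (funext fun i => mul_inv_cancel₀ (hd i))

theorem inv_diagonal_inv_mul_mul_diagonal_inv {d e : n → K} (hd : ∀ i, d i ≠ 0)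
    (he : ∀ i, e i ≠ 0) (A : Matrix n n K) :
    (diagonal d⁻¹ * A * diagonal e⁻¹)⁻¹ = diagonal e * A⁻¹ * diagonal d := by
  rw [mul_inv_rev, mul_inv_rev, inv_diagonal_inv hd, inv_diagonal_inv he, mul_assoc]

end Matrix

open Matrix in
theorem stmt_10_general (q : ℕ) (t : ℂ) (ht : t ≠ 0)
    (x : Matrix (Fin q) (Fin q) ℂ)
    (J : Matrix (Fin q) (Fin q) ℂ → Matrix (Fin q) (Fin q) ℂ)
    (hJ : ∀ y, J y = Matrix.of fun i j => (y i j)⁻¹)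
    (D : Matrix (Fin q) (Fin q) ℂ)
    (hD : D = Matrix.diagonal fun i : Fin q => if (i : ℕ) < 2 then t else 1)
    (K : Matrix (Fin q) (Fin q) ℂ → Matrix (Fin q) (Fin q) ℂ)
    (hK : ∀ y, K y = (J y)⁻¹) :
    (J (D * x * D))⁻¹ = D * (J x)⁻¹ * D ∧ K (D * x * D) = D * K x * D := by
  set d : Fin q → ℂ := fun i => if (i : ℕ) < 2 then t else 1
  have hd : ∀ i, d i ≠ 0 := fun i => by dsimp only [d]; split_ifs <;> simp [ht]
  have hJDxD : (J (D * x * D))⁻¹ = D * (J x)⁻¹ * D := by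
    rw [hJ, hJ, hD, of_inv_diagonal_mul_mul_diagonal,
      inv_diagonal_inv_mul_mul_diagonal_inv hd hd]
  exact ⟨hJDxD, by rw [hK, hK, hJDxD]⟩

/-- For D = diag(t,t,1,…,1) with t ≠ 0 and x symmetric with all entries nonzero and
J(x) invertible: (J(D x D))⁻¹ = D (J(x))⁻¹ D, i.e. K(D x D) = D K(x) D. -/
theorem stmt_10 (q : ℕ) (hq : 2 ≤ q) (t : ℂ) (ht : t ≠ 0)
    (x : Matrix (Fin q) (Fin q) ℂ) (hsymm : x.IsSymm) (hx : ∀ i j, x i j ≠ 0)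
    (J : Matrix (Fin q) (Fin q) ℂ → Matrix (Fin q) (Fin q) ℂ)
    (hJ : ∀ y, J y = Matrix.of fun i j => (y i j)⁻¹)
    (hJx : IsUnit (J x).det)
    (D : Matrix (Fin q) (Fin q) ℂ)
    (hD : D = Matrix.diagonal fun i : Fin q => if (i : ℕ) < 2 then t else 1)
    (K : Matrix (Fin q) (Fin q) ℂ → Matrix (Fin q) (Fin q) ℂ)
    (hK : ∀ y, K y = (J y)⁻¹) :
    (J (D * x * D))⁻¹ = D * (J x)⁻¹ * D ∧ K (D * x * D) = D * K x * D :=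
  stmt_10_general q t ht x J hJ D hD K hK
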